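/- Let n ≥ 2, l ∈ ℤ, ω = e^{2πi/n}, and define n_l(t) = Σ over pairs (j,k) with 0 ≤ j,k ≤ n−1, j ≠ k, j+k ≠ n, of e^{−i·t·sin(π(j+k)/n)·sin(π(j−k)/n)} · ω^{l(j−k)}. Then for every T ≥ 0, |∫_0^T n_l(t) dt| ≤ 32·(n·ln(n))². -/

import Mathlib

/-!
Each summand of `n_l(t)` is `e^{-its} ω^m` with `s = sin(π(j+k)/n) sin(π(j-k)/n) ≠ 0`, so its
integral over `[0, T]` has norm at most `2 / |s|`. Since `|sin(π x / n)|` depends only on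
`x mod n`, and `(j, k) ↦ (j + k, j - k)` is at most two-to-one on `(ℤ/n)²`, the sum of these
bounds is at most `4 (Σ_{m=1}^{n-1} csc(π m / n))²`. Jordan's inequality in the form
`sin x ≥ 2x(π - x)/π²` gives `csc(π m / n) ≤ (n/2)(1/m + 1/(n-m))`, so the last sum is at most
`n H_{n-1} ≤ 2 n ln n`; this yields the bound with constant 16.
-/

/-- The oscillatory trigonometric sum `n_l(t)` for the `n`-cycle:
`Σ_{0 ≤ j,k ≤ n−1, j ≠ k, j+k ≠ n} e^{−i t sin(π(j+k)/n) sin(π(j−k)/n)} ω^{l(j−k)}`,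
with `ω = e^{2πi/n}`. -/
noncomputable def cycleOsc (n : ℕ) (l : ℤ) (t : ℝ) : ℂ :=
  ∑ j ∈ Finset.range n, ∑ k ∈ Finset.range n,
    if j ≠ k ∧ j + k ≠ n then
      Complex.exp (-(Complex.I * (t : ℂ)) *
          ((Real.sin (Real.pi * ((j : ℝ) + (k : ℝ)) / n)
            * Real.sin (Real.pi * ((j : ℝ) - (k : ℝ)) / n) : ℝ) : ℂ))
        * Complex.exp (2 * Real.pi * Complex.I / n) ^ (l * ((j : ℤ) - (k : ℤ)))
    else 0

open Real Finset

theorem Finset.sum_range_two_mul {M : Type*} [AddCommMonoid M] (f : ℕ → M) (n : ℕ) :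
    ∑ i ∈ range (2 * n), f i = ∑ i ∈ range n, (f (2 * i) + f (2 * i + 1)) := by
  induction n with
  | zero => simp
  | succ n ih =>
    rw [mul_add, mul_one, sum_range_succ, sum_range_succ, sum_range_succ, ih, add_assoc]

namespace ZMod

variable {n : ℕ} [NeZero n]

theorem sum_univ_eq_sum_range {M : Type*} [AddCommMonoid M] (f : ZMod n → M) :
    ∑ x, f x = ∑ i ∈ range n, f i :=
  sum_nbij' val (↑) (fun x _ => mem_range.2 (val_lt x)) (fun _ _ => mem_univ _)
    (fun x _ => natCast_zmod_val x)
    (fun i hi => by rw [val_natCast, Nat.mod_eq_of_lt (mem_range.1 hi)])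
    (fun x _ => by rw [natCast_zmod_val])

theorem sum_two_mul_le (h : ZMod n → ℝ) (h0 : ∀ x, 0 ≤ h x) :
    ∑ x, h (2 * x) ≤ 2 * ∑ x, h x :=
  calc ∑ x, h (2 * x) ≤ ∑ x, (h (2 * x) + h (2 * x + 1)) :=
        sum_le_sum fun x _ => le_add_of_nonneg_right (h0 _)
    _ = ∑ i ∈ range (2 * n), h i := by
        rw [sum_range_two_mul, sum_univ_eq_sum_range]; push_cast; rfl
    _ = 2 * ∑ x, h x := by
        rw [two_mul n, sum_range_add, sum_univ_eq_sum_range]; simp [two_mul]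

/-- Substituting `s = j + k` leaves `∑ s, g s * ∑ j, g (2 * j - s)`, and `j ↦ 2 * j` is at most
two-to-one. -/
theorem sum_sum_add_mul_sub_le (g : ZMod n → ℝ) (hg : ∀ x, 0 ≤ g x) :
    ∑ j, ∑ k, g (j + k) * g (j - k) ≤ 2 * (∑ x, g x) ^ 2 := by
  have hshift (j : ZMod n) : ∑ k, g (j + k) * g (j - k) = ∑ s, g s * g (2 * j - s) :=
    Fintype.sum_equiv (Equiv.addLeft j) _ _ fun k => by
      rw [Equiv.coe_addLeft, show 2 * j - (j + k) = j - k by ring]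
  have hdouble (s : ZMod n) : ∑ j, g (2 * j - s) ≤ 2 * ∑ x, g x := by
    rw [← Fintype.sum_equiv (Equiv.subRight s) (fun x => g (x - s)) g fun _ => rfl]
    exact sum_two_mul_le (fun x => g (x - s)) fun _ => hg _
  calc ∑ j, ∑ k, g (j + k) * g (j - k) = ∑ s, g s * ∑ j, g (2 * j - s) := by
        simp_rw [hshift, mul_sum]; exact sum_comm
    _ ≤ ∑ s, g s * (2 * ∑ x, g x) :=
        sum_le_sum fun s _ => mul_le_mul_of_nonneg_left (hdouble s) (hg s)
    _ = 2 * (∑ x, g x) ^ 2 := by rw [← sum_mul]; ring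

end ZMod

theorem two_mul_mul_pi_sub_div_le_sin {x : ℝ} (hx₀ : 0 ≤ x) (hxπ : x ≤ π) :
    2 * x * (π - x) / π ^ 2 ≤ sin x := by
  wlog hx : x ≤ π / 2 generalizing x
  · have := this (x := π - x) (by linarith) (by linarith) (by linarith)
    rwa [sin_pi_sub, sub_sub_cancel, mul_right_comm] at this
  calc 2 * x * (π - x) / π ^ 2 ≤ 2 * x * π / π ^ 2 := by gcongr; linarith
    _ = 2 / π * x := by field_simp
    _ ≤ sin x := mul_le_sin hx₀ hx

theorem inv_sin_pi_mul_div_le {m n : ℝ} (hm : 0 < m) (hmn : m < n) :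
    (sin (π * m / n))⁻¹ ≤ n / 2 * (1 / m + 1 / (n - m)) := by
  have hn : 0 < n := hm.trans hmn
  have hnm : 0 < n - m := sub_pos.2 hmn
  have hsin : 2 * m * (n - m) / n ^ 2 ≤ sin (π * m / n) := by
    have := two_mul_mul_pi_sub_div_le_sin (x := π * m / n) (by positivity)
      (by rw [div_le_iff₀ hn]; nlinarith [pi_pos])
    convert this using 1
    field_simp
  calc (sin (π * m / n))⁻¹ ≤ (2 * m * (n - m) / n ^ 2)⁻¹ := inv_anti₀ (by positivity) hsin
    _ = n / 2 * (1 / m + 1 / (n - m)) := by field_simp; ring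

-- The `m = 0` term is `(sin 0)⁻¹ = 0`.
theorem sum_inv_sin_pi_mul_div_le (n : ℕ) :
    ∑ m ∈ range n, (sin (π * m / n))⁻¹ ≤ n * harmonic (n - 1) := by
  rcases Nat.eq_zero_or_pos n with rfl | hn
  · simp
  have hharm : ∑ m ∈ Ico 1 n, (1 / (m : ℝ)) = harmonic (n - 1) := by
    rw [harmonic_eq_sum_Icc, Icc_sub_one_right_eq_Ico_of_not_isMin (by simpa using hn.ne')]
    push_cast; simp only [one_div]
  have hreflect : ∑ m ∈ Ico 1 n, (1 / ((n : ℝ) - m)) = ∑ m ∈ Ico 1 n, (1 / (m : ℝ)) := by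
    have := sum_Ico_reflect (fun j => 1 / (j : ℝ)) 1 (m := n) (n := n) (by omega)
    simp only [Nat.add_sub_cancel, Nat.add_sub_cancel_left] at this
    rw [← this]
    exact sum_congr rfl fun m hm => by rw [Nat.cast_sub (mem_Ico.1 hm).2.le]
  rw [range_eq_Ico, sum_eq_sum_Ico_succ_bot hn]
  calc (sin (π * (0 : ℕ) / n))⁻¹ + ∑ m ∈ Ico 1 n, (sin (π * m / n))⁻¹
      = ∑ m ∈ Ico 1 n, (sin (π * m / n))⁻¹ := by simp
    _ ≤ ∑ m ∈ Ico 1 n, n / 2 * (1 / (m : ℝ) + 1 / (n - m)) := sum_le_sum fun m hm => by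
        obtain ⟨h1, h2⟩ := mem_Ico.1 hm
        exact inv_sin_pi_mul_div_le (by exact_mod_cast h1) (by exact_mod_cast h2)
    _ = n * harmonic (n - 1) := by rw [← mul_sum, sum_add_distrib, hreflect, hharm]; ring

theorem harmonic_pred_le_two_mul_log {n : ℕ} (hn : 2 ≤ n) :
    (harmonic (n - 1) : ℝ) ≤ 2 * log n := by
  have hn' : (2 : ℝ) ≤ n := by exact_mod_cast hn
  have hcast : ((n - 1 : ℕ) : ℝ) = n - 1 := by rw [Nat.cast_sub (by omega)]; simp
  -- `e (n - 1) ≤ n ^ 2` because `e < 4`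
  have hkey : (n : ℝ) - 1 ≤ n ^ 2 / exp 1 := by
    rw [le_div_iff₀ (exp_pos 1)]; nlinarith [exp_one_lt_d9]
  calc (harmonic (n - 1) : ℝ) ≤ 1 + log (n - 1) := hcast ▸ harmonic_le_one_add_log (n - 1)
    _ ≤ 1 + log (n ^ 2 / exp 1) := by gcongr; linarith
    _ = 2 * log n := by
        rw [log_div (by positivity) (exp_pos 1).ne', log_pow, log_exp]; push_cast; ring

/-- `csc (π a / n)`, computed at the representative `a.val ∈ [0, n)`; at `a = 0` it is
`(sin 0)⁻¹ = 0`. -/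
noncomputable def cscPi (n : ℕ) (a : ZMod n) : ℝ := (sin (π * a.val / n))⁻¹

theorem sin_pi_mul_val_div_nonneg {n : ℕ} [NeZero n] (a : ZMod n) : 0 ≤ sin (π * a.val / n) :=
  sin_nonneg_of_nonneg_of_le_pi (by positivity) <| by
    rw [mul_div_assoc]
    exact mul_le_of_le_one_right pi_pos.le <|
      div_le_one_of_le₀ (by exact_mod_cast (ZMod.val_lt a).le) (Nat.cast_nonneg n)

theorem cscPi_nonneg {n : ℕ} [NeZero n] (a : ZMod n) : 0 ≤ cscPi n a :=
  inv_nonneg.2 (sin_pi_mul_val_div_nonneg a)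

theorem cscPi_intCast (n : ℕ) [NeZero n] (x : ℤ) : cscPi n x = |sin (π * x / n)|⁻¹ := by
  have hn : (n : ℝ) ≠ 0 := Nat.cast_ne_zero.2 (NeZero.ne n)
  have hval : ((x : ZMod n).val : ℝ) = (x % n : ℤ) := by
    exact_mod_cast ZMod.val_intCast (n := n) x
  have hsplit : π * x / n = π * (x % n : ℤ) / n + (x / n : ℤ) * π := by
    rw [Int.emod_def]; push_cast; field_simp; ring
  rw [cscPi, hsplit, sin_add_int_mul_pi, abs_mul, abs_neg_one_zpow, one_mul, ← hval,
    abs_of_nonneg (sin_pi_mul_val_div_nonneg _)]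

theorem sum_cscPi_eq (n : ℕ) [NeZero n] :
    ∑ a : ZMod n, cscPi n a = ∑ m ∈ range n, (sin (π * m / n))⁻¹ := by
  rw [ZMod.sum_univ_eq_sum_range]
  exact sum_congr rfl fun m hm => by
    rw [cscPi, ZMod.val_natCast, Nat.mod_eq_of_lt (mem_range.1 hm)]

theorem sin_pi_mul_div_ne_zero {n : ℕ} {x : ℤ} (hn : n ≠ 0) (hx : ¬ (n : ℤ) ∣ x) :
    sin (π * x / n) ≠ 0 := by
  rw [Ne, sin_eq_zero_iff]
  rintro ⟨k, hk⟩
  refine hx ⟨k, ?_⟩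
  have hn' : (n : ℝ) ≠ 0 := Nat.cast_ne_zero.2 hn
  field_simp at hk
  exact_mod_cast (by linarith [hk] : (x : ℝ) = n * k)

theorem norm_integral_exp_mul_le (a b s : ℝ) (hs : s ≠ 0) (c : ℂ) :
    ‖∫ t in a..b, Complex.exp (-(Complex.I * t) * s) * c‖ ≤ 2 * ‖c‖ / |s| := by
  have hIs : -(Complex.I * s) ≠ 0 := by simp [hs]
  have hunit (t : ℝ) : ‖Complex.exp (-(Complex.I * s) * t)‖ = 1 := by
    rw [Complex.norm_exp]; simp
  simp_rw [show ∀ t : ℝ, -(Complex.I * t) * s = -(Complex.I * s) * t from fun t => by ring]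
  rw [intervalIntegral.integral_mul_const, integral_exp_mul_complex hIs, norm_mul, norm_div]
  have hden : ‖-(Complex.I * s)‖ = |s| := by simp
  rw [hden, div_mul_eq_mul_div]
  gcongr
  calc _ ≤ _ := norm_sub_le _ _
    _ = 2 := by rw [hunit, hunit]; norm_num

theorem norm_integral_cycleOsc_le (n : ℕ) [NeZero n] (l : ℤ) (a b : ℝ) :
    ‖∫ t in a..b, cycleOsc n l t‖ ≤
      2 * ∑ j ∈ range n, ∑ k ∈ range n, cscPi n (j + k) * cscPi n (j - k) := by
  have hn : n ≠ 0 := NeZero.ne n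
  unfold cycleOsc
  rw [intervalIntegral.integral_finsetSum, mul_sum]
  swap
  · exact fun j _ => (continuous_finsetSum _ fun k _ =>
      continuous_if_const _ (fun _ => by fun_prop) fun _ => continuous_const).intervalIntegrable _ _
  refine (norm_sum_le _ _).trans (sum_le_sum fun j hj => ?_)
  rw [intervalIntegral.integral_finsetSum, mul_sum]
  swap
  · exact fun k _ => (continuous_if_const _ (fun _ => by fun_prop) fun _ =>
      continuous_const).intervalIntegrable _ _
  refine (norm_sum_le _ _).trans (sum_le_sum fun k hk => ?_)
  by_cases hjk : j ≠ k ∧ j + k ≠ n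
  swap
  · simp only [if_neg hjk, intervalIntegral.integral_zero, norm_zero]
    exact mul_nonneg zero_le_two (mul_nonneg (cscPi_nonneg _) (cscPi_nonneg _))
  simp only [if_pos hjk]
  rw [mem_range] at hj hk
  have hsum : ¬ (n : ℤ) ∣ (j + k : ℤ) := fun h => hjk.2 <| by
    have := Int.eq_zero_of_abs_lt_dvd (dvd_sub_self_right.2 h) (abs_lt.2 ⟨by omega, by omega⟩)
    omega
  have hdiff : ¬ (n : ℤ) ∣ (j - k : ℤ) := fun h => hjk.1 <| by
    have := Int.eq_zero_of_abs_lt_dvd h (abs_lt.2 ⟨by omega, by omega⟩)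
    omega
  have hs := mul_ne_zero (sin_pi_mul_div_ne_zero hn hsum) (sin_pi_mul_div_ne_zero hn hdiff)
  have hω : ‖Complex.exp (2 * π * Complex.I / n) ^ (l * (j - k : ℤ))‖ = 1 := by
    rw [norm_zpow, Complex.norm_exp]; simp
  push_cast at hs
  refine (norm_integral_exp_mul_le a b _ hs _).trans_eq ?_
  have hcsc_add : cscPi n (j + k) = |sin (π * (j + k) / n)|⁻¹ := by
    exact_mod_cast cscPi_intCast n (j + k)
  have hcsc_sub : cscPi n (j - k) = |sin (π * (j - k) / n)|⁻¹ := by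
    exact_mod_cast cscPi_intCast n (j - k)
  rw [hω, hcsc_add, hcsc_sub, abs_mul, mul_one, div_eq_mul_inv, mul_inv]

theorem integral_cycleOsc_le_general
    (n : ℕ) (hn : 2 ≤ n) (l : ℤ) (T : ℝ) :
    ‖∫ t in (0 : ℝ)..T, cycleOsc n l t‖ ≤ 32 * ((n : ℝ) * Real.log n) ^ 2 := by
  have : NeZero n := ⟨by omega⟩
  have hcsc : ∑ a : ZMod n, cscPi n a ≤ 2 * n * log n := by
    rw [sum_cscPi_eq]
    calc _ ≤ n * (harmonic (n - 1) : ℝ) := sum_inv_sin_pi_mul_div_le n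
      _ ≤ n * (2 * log n) := by gcongr; exact harmonic_pred_le_two_mul_log hn
      _ = 2 * n * log n := by ring
  calc ‖∫ t in (0 : ℝ)..T, cycleOsc n l t‖
      ≤ 2 * ∑ j ∈ range n, ∑ k ∈ range n, cscPi n (j + k) * cscPi n (j - k) :=
        norm_integral_cycleOsc_le n l 0 T
    _ = 2 * ∑ x : ZMod n, ∑ y : ZMod n, cscPi n (x + y) * cscPi n (x - y) := by
        simp only [ZMod.sum_univ_eq_sum_range]
    _ ≤ 2 * (2 * (∑ a : ZMod n, cscPi n a) ^ 2) := by
        gcongr; exact ZMod.sum_sum_add_mul_sub_le _ cscPi_nonneg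
    _ ≤ 2 * (2 * (2 * n * log n) ^ 2) := by
        gcongr; exact sum_nonneg fun a _ => cscPi_nonneg a
    _ ≤ 32 * ((n : ℝ) * Real.log n) ^ 2 := by nlinarith [sq_nonneg ((n : ℝ) * log n)]

/-- (Lemma 2 of the paper.) The time integral of the oscillatory sum
`n_l(t)` is bounded by `32·(n·ln n)²`. -/
theorem integral_cycleOsc_le
    (n : ℕ) (hn : 2 ≤ n) (l : ℤ) (T : ℝ) (hT : 0 ≤ T) :
    ‖∫ t in (0 : ℝ)..T, cycleOsc n l t‖ ≤ 32 * ((n : ℝ) * Real.log n) ^ 2 :=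
  integral_cycleOsc_le_general n hn l T
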